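/- Fix Heston-type parameters v > 0, κ > 0, θ > 0, ξ > 0, ρ ∈ (−1,1), ρ̄ := √(1−ρ²). For every t ≥ 0 and τ > 0, the function u ↦ Ξ(u,t,τ) is strictly convex on the open set K_{t,τ}, and it is essentially smooth on K_{t,τ}: for every sequence (u_n) in K_{t,τ} converging to a boundary point of K_{t,τ}, |∂_u Ξ(u_n,t,τ)| → ∞. -/

import Mathlib

open Filter Topology Set

/-- The limiting lmgf `Ξ(u, t, τ)` of the Heston diagonal small-maturity regime:
`Ξ(u,t,τ) = u v / (ξ(ρ̄ cot(ξ ρ̄ τ u / 2) − ρ) − ξ² t u / 2)` for `u ≠ 0`, `Ξ(0,t,τ) = 0`. -/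
noncomputable def Xi (v ξ ρ : ℝ) (u t τ : ℝ) : ℝ :=
  if u = 0 then 0
  else u * v / (ξ * (Real.sqrt (1 - ρ ^ 2) *
    Real.cot (ξ * Real.sqrt (1 - ρ ^ 2) * τ * u / 2) - ρ) - ξ ^ 2 * t * u / 2)

/-- Left endpoint `u₋(τ)` of the limiting domain. -/
noncomputable def uMinusK (ξ ρ τ : ℝ) : ℝ :=
  if ρ < 0 then 2 / (Real.sqrt (1 - ρ ^ 2) * ξ * τ) * Real.arctan (Real.sqrt (1 - ρ ^ 2) / ρ)
  else if ρ = 0 then -Real.pi / (ξ * τ)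
  else 2 / (Real.sqrt (1 - ρ ^ 2) * ξ * τ) * (Real.arctan (Real.sqrt (1 - ρ ^ 2) / ρ) - Real.pi)

/-- Right endpoint `u₊(τ)` of the limiting domain. -/
noncomputable def uPlusK (ξ ρ τ : ℝ) : ℝ :=
  if ρ < 0 then
    2 / (Real.sqrt (1 - ρ ^ 2) * ξ * τ) * (Real.arctan (Real.sqrt (1 - ρ ^ 2) / ρ) + Real.pi)
  else if ρ = 0 then Real.pi / (ξ * τ)
  else 2 / (Real.sqrt (1 - ρ ^ 2) * ξ * τ) * Real.arctan (Real.sqrt (1 - ρ ^ 2) / ρ)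

/-- The limiting domain `K_{t,τ} = {u ∈ (u₋(τ), u₊(τ)) : ξ² t Ξ(u,0,τ) < 2v}`. -/
noncomputable def Kdom (v ξ ρ t τ : ℝ) : Set ℝ :=
  {u ∈ Set.Ioo (uMinusK ξ ρ τ) (uPlusK ξ ρ τ) | ξ ^ 2 * t * Xi v ξ ρ u 0 τ < 2 * v}

/-!
Put `α = arccos ρ`, `a = ξ ρ̄ τ / 2` and `c = ξ² t / 2`. Then `(u₋(τ), u₊(τ)) = ((α - π)/a, α/a)`
is exactly where `α - a u ∈ (0, π)`, and there, since `sin α = ρ̄` and `cos α = ρ`, multiplying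
numerator and denominator of `Ξ` by `sin (a u)` gives
`Ξ(u,t,τ) = v u sin(a u) / D_c(u)` with `D_c(u) = ξ sin(α - a u) - c u sin(a u)`,
and `K_{t,τ}` is where `D_c > 0`. With `Λ = Ξ(·,0,τ)` we have `Ξ(·,t,τ) = Λ / (1 - (c/v) Λ)`, and
`y ↦ y / (1 - k y)` is convex and increasing on `k y < 1`, so strict convexity reduces to that
of `Λ`, whose second derivative is a positive multiple of `sin s + (α - s) cos s` at
`s = α - a u`; this is `≥ sin α > 0` by concavity of `sin` on `[0, π]`.

Moreover `∂_u Ξ = v W / D_c²` with `W(u) = ξ (sin(a u) sin(α - a u) + a u sin α)`, and `W`, `D_c`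
are continuous on `ℝ`. On the boundary of `K_{t,τ}` the denominator `D_c` vanishes (at `u₋, u₊`
because `sin(α - a u) = 0` and `u sin(a u) ≥ 0`), `0` is not a boundary point, and
`u W(u) > 0` for `u ≠ 0` in `[u₋, u₊]`; hence `|∂_u Ξ| → ∞`.
-/

open Real

theorem sin_le_sin_add_sub_mul_cos {x y : ℝ} (hx : x ∈ Icc 0 π) (hy : y ∈ Icc 0 π) :
    sin y ≤ sin x + (y - x) * cos x := by
  have hsin := strictConcaveOn_sin_Icc.concaveOn
  rcases lt_trichotomy x y with hxy | rfl | hyx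
  · have := hsin.slope_le_of_hasDerivAt hx hy hxy (hasDerivAt_sin x)
    rw [slope_def_field, div_le_iff₀ (sub_pos.2 hxy)] at this
    linarith
  · simp
  · have := hsin.le_slope_of_hasDerivAt hy hx hyx (hasDerivAt_sin x)
    rw [slope_def_field, le_div_iff₀ (sub_pos.2 hyx)] at this
    linarith

theorem mul_sin_mul_nonneg {a u : ℝ} (ha : 0 < a) (hu : a * u ∈ Icc (-π) π) :
    0 ≤ u * sin (a * u) := by
  rcases le_total 0 u with h | h
  · exact mul_nonneg h (sin_nonneg_of_nonneg_of_le_pi (by positivity) hu.2)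
  · exact mul_nonneg_of_nonpos_of_nonpos h
      (sin_nonpos_of_nonpos_of_neg_pi_le (mul_nonpos_of_nonneg_of_nonpos ha.le h) hu.1)

theorem convexOn_div_one_sub_mul {k : ℝ} (hk : 0 ≤ k) :
    ConvexOn ℝ {y | k * y < 1} fun y => y / (1 - k * y) := by
  have hconv : Convex ℝ {y | k * y < 1} := convex_halfSpace_lt (LinearMap.mulLeft ℝ k).isLinear 1
  refine ⟨hconv, fun x hx y hy p q hp hq hpq => ?_⟩
  have hC : 0 < 1 - k * (p • x + q • y) := sub_pos.2 (hconv hx hy hp hq hpq)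
  simp only [mem_ofPred_eq, smul_eq_mul] at *
  obtain rfl : q = 1 - p := by linarith
  have hA : 0 < 1 - k * x := by linarith
  have hB : 0 < 1 - k * y := by linarith
  rw [mul_div_assoc', mul_div_assoc', div_add_div _ _ hA.ne' hB.ne',
    div_le_div_iff₀ hC (mul_pos hA hB)]
  nlinarith [mul_nonneg (mul_nonneg hp hq) (mul_nonneg hk (sq_nonneg (x - y)))]

theorem strictMonoOn_div_one_sub_mul (k : ℝ) :
    StrictMonoOn (fun y => y / (1 - k * y)) {y | k * y < 1} := by
  intro x hx y hy hxy
  simp only [mem_ofPred_eq] at *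
  rw [div_lt_div_iff₀ (by linarith) (by linarith)]
  nlinarith

theorem StrictConvexOn.div_one_sub_mul {s : Set ℝ} {g : ℝ → ℝ} {k : ℝ}
    (hg : StrictConvexOn ℝ s g) (hk : 0 ≤ k) :
    StrictConvexOn ℝ {x ∈ s | k * g x < 1} fun x => g x / (1 - k * g x) := by
  have hconv : Convex ℝ {x ∈ s | k * g x < 1} := by
    simpa only [Pi.smul_apply, smul_eq_mul] using (hg.convexOn.smul hk).convex_lt 1
  refine ⟨hconv, fun x hx y hy hxy p q hp hq hpq => ?_⟩
  have hφ := convexOn_div_one_sub_mul hk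
  have hmem : p • g x + q • g y ∈ {y | k * y < 1} := hφ.1 hx.2 hy.2 hp.le hq.le hpq
  exact (strictMonoOn_div_one_sub_mul k (hconv hx hy hp.le hq.le hpq).2 hmem
    (hg.2 hx.1 hy.1 hxy hp hq hpq)).trans_le (hφ.2 hx.2 hy.2 hp.le hq.le hpq)

theorem tendsto_abs_div_sq_atTop {ι : Type*} {l : Filter ι} {f g : ι → ℝ} {y : ℝ}
    (hf : Tendsto f l (𝓝 y)) (hy : y ≠ 0) (hg : Tendsto g l (𝓝 0))
    (hg0 : ∀ᶠ i in l, g i ≠ 0) : Tendsto (fun i => |f i / g i ^ 2|) l atTop := by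
  have hsq : Tendsto (fun i => g i ^ 2) l (𝓝[>] 0) :=
    tendsto_nhdsWithin_of_tendsto_nhds_of_eventually_within _ (by simpa using hg.pow 2)
      (hg0.mono fun i hi => show 0 < g i ^ 2 by positivity)
  refine (hf.abs.pos_mul_atTop (abs_pos.2 hy) (tendsto_inv_nhdsGT_zero.comp hsq)).congr
    fun i => ?_
  simp [div_eq_mul_inv]

noncomputable def xiDen (ξ α a c u : ℝ) : ℝ := ξ * sin (α - a * u) - c * (u * sin (a * u))

noncomputable def xiTrig (v ξ α a c u : ℝ) : ℝ := v * (u * sin (a * u)) / xiDen ξ α a c u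

noncomputable def xiSlopeNum (ξ α a u : ℝ) : ℝ :=
  ξ * (sin (a * u) * sin (α - a * u) + a * u * sin α)

noncomputable def xiDom (ξ α a c : ℝ) : Set ℝ :=
  {u ∈ Ioo ((α - π) / a) (α / a) | 0 < xiDen ξ α a c u}

section TrigForm

variable {v ξ α a c u : ℝ}

theorem sin_eq_sin_mul_cos_sub_add (α a u : ℝ) :
    sin α = sin (a * u) * cos (α - a * u) + cos (a * u) * sin (α - a * u) := by
  rw [← sin_add, add_sub_cancel]

theorem hasDerivAt_xiTrig (v : ℝ) (h : xiDen ξ α a c u ≠ 0) :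
    HasDerivAt (xiTrig v ξ α a c) (v * xiSlopeNum ξ α a u / xiDen ξ α a c u ^ 2) u := by
  have hau : HasDerivAt (fun y => a * y) a u := by simpa using (hasDerivAt_id' u).const_mul a
  have hM := (hasDerivAt_id' u).fun_mul hau.sin
  have hD : HasDerivAt (xiDen ξ α a c) _ u := ((hau.const_sub α).sin.const_mul ξ).fun_sub
    (hM.const_mul c)
  refine ((hM.const_mul v).fun_div hD h).congr_deriv ?_
  rw [xiSlopeNum, sin_eq_sin_mul_cos_sub_add α a u, xiDen]
  ring

theorem hasDerivAt_xiSlope (v : ℝ) (hξ : ξ ≠ 0) (h : sin (α - a * u) ≠ 0) :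
    HasDerivAt (fun y => v * xiSlopeNum ξ α a y / (ξ * sin (α - a * y)) ^ 2)
      (2 * v * a * ξ ^ 2 * sin α * (sin (α - a * u) + a * u * cos (α - a * u))
        / (ξ * sin (α - a * u)) ^ 3) u := by
  have hau : HasDerivAt (fun y => a * y) a u := by simpa using (hasDerivAt_id' u).const_mul a
  have hW : HasDerivAt (xiSlopeNum ξ α a) _ u :=
    ((hau.sin.fun_mul (hau.const_sub α).sin).fun_add (hau.mul_const (sin α))).const_mul ξ
  have hD := ((hau.const_sub α).sin.const_mul ξ).fun_pow 2
  refine ((hW.const_mul v).fun_div hD (pow_ne_zero 2 (mul_ne_zero hξ h))).congr_deriv ?_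
  field_simp
  rw [xiSlopeNum, sin_eq_sin_mul_cos_sub_add α a u]
  ring

theorem mem_Ioo_div_iff (ha : 0 < a) :
    u ∈ Ioo ((α - π) / a) (α / a) ↔ α - a * u ∈ Ioo 0 π := by
  simp only [mem_Ioo, div_lt_iff₀ ha, lt_div_iff₀ ha]
  constructor <;> rintro ⟨h₁, h₂⟩ <;> constructor <;> linarith

theorem mem_Icc_div_iff (ha : 0 < a) :
    u ∈ Icc ((α - π) / a) (α / a) ↔ α - a * u ∈ Icc 0 π := by
  simp only [mem_Icc, div_le_iff₀ ha, le_div_iff₀ ha]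
  constructor <;> rintro ⟨h₁, h₂⟩ <;> constructor <;> linarith

theorem mul_mem_Icc_neg_pi_pi (hα : α ∈ Ioo 0 π) (hu : α - a * u ∈ Icc 0 π) :
    a * u ∈ Icc (-π) π := by
  constructor <;> linarith [hα.1, hα.2, hu.1, hu.2]

@[simp]
theorem xiDen_zero : xiDen ξ α a 0 u = ξ * sin (α - a * u) := by
  simp [xiDen]

theorem xiDen_zero_pos (hξ : 0 < ξ) (ha : 0 < a)
    (hu : u ∈ Ioo ((α - π) / a) (α / a)) : 0 < xiDen ξ α a 0 u := by
  rw [xiDen_zero]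
  exact mul_pos hξ (sin_pos_of_pos_of_lt_pi ((mem_Ioo_div_iff ha).1 hu).1
    ((mem_Ioo_div_iff ha).1 hu).2)

theorem strictConvexOn_xiTrig_zero (hv : 0 < v) (hξ : 0 < ξ) (ha : 0 < a)
    (hα : α ∈ Ioo 0 π) : StrictConvexOn ℝ (Ioo ((α - π) / a) (α / a)) (xiTrig v ξ α a 0) := by
  set S := Ioo ((α - π) / a) (α / a)
  have hsin : ∀ u ∈ S, 0 < sin (α - a * u) := fun u hu =>
    sin_pos_of_pos_of_lt_pi ((mem_Ioo_div_iff ha).1 hu).1 ((mem_Ioo_div_iff ha).1 hu).2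
  have hderiv : ∀ u ∈ S, HasDerivAt (xiTrig v ξ α a 0)
      (v * xiSlopeNum ξ α a u / (ξ * sin (α - a * u)) ^ 2) u := fun u hu => by
    simpa using hasDerivAt_xiTrig (c := 0) v (by simpa using (mul_pos hξ (hsin u hu)).ne')
  have hslope := fun u hu => hasDerivAt_xiSlope (u := u) v hξ.ne' (hsin u hu).ne'
  have hslope_pos : ∀ u ∈ S,
      0 < 2 * v * a * ξ ^ 2 * sin α * (sin (α - a * u) + a * u * cos (α - a * u))
        / (ξ * sin (α - a * u)) ^ 3 := fun u hu => by
    have hs := (mem_Ioo_div_iff ha).1 hu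
    have := sin_le_sin_add_sub_mul_cos (Ioo_subset_Icc_self hs) (Ioo_subset_Icc_self hα)
    have hα_sin := sin_pos_of_pos_of_lt_pi hα.1 hα.2
    have : 0 < sin (α - a * u) + a * u * cos (α - a * u) := by
      rw [sub_sub_cancel] at this; linarith
    have := hsin u hu
    positivity
  have hmono : StrictMonoOn (fun y => v * xiSlopeNum ξ α a y / (ξ * sin (α - a * y)) ^ 2) S := by
    refine strictMonoOn_of_deriv_pos (convex_Ioo _ _)
      (fun u hu => (hslope u hu).continuousAt.continuousWithinAt) fun u hu => ?_
    rw [interior_Ioo] at hu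
    rw [(hslope u hu).deriv]
    exact hslope_pos u hu
  refine StrictMonoOn.strictConvexOn_of_deriv (convex_Ioo _ _)
    (fun u hu => (hderiv u hu).continuousAt.continuousWithinAt) ?_
  rw [interior_Ioo]
  intro x hx y hy hxy
  rw [(hderiv x hx).deriv, (hderiv y hy).deriv]
  exact hmono hx hy hxy

theorem one_sub_mul_xiTrig_zero (hv : v ≠ 0) (h : xiDen ξ α a 0 u ≠ 0) :
    1 - c / v * xiTrig v ξ α a 0 u = xiDen ξ α a c u / xiDen ξ α a 0 u := by
  rw [xiDen_zero] at h
  obtain ⟨hξ, hs⟩ := mul_ne_zero_iff.1 h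
  rw [xiTrig, xiDen_zero, xiDen, eq_div_iff h]
  generalize sin (α - a * u) = s at hs ⊢
  field_simp

theorem xiTrig_eq_div_one_sub (hv : v ≠ 0) (h : xiDen ξ α a 0 u ≠ 0) :
    xiTrig v ξ α a c u = xiTrig v ξ α a 0 u / (1 - c / v * xiTrig v ξ α a 0 u) := by
  rw [one_sub_mul_xiTrig_zero hv h, xiTrig, xiTrig, div_div_div_cancel_right₀ h]

theorem xiDom_eq_sep (hv : 0 < v) (hξ : 0 < ξ) (ha : 0 < a) :
    xiDom ξ α a c =
      {u ∈ Ioo ((α - π) / a) (α / a) | c / v * xiTrig v ξ α a 0 u < 1} := by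
  ext u
  refine and_congr_right fun hu => ?_
  have hD := xiDen_zero_pos hξ ha hu
  rw [← sub_pos (a := (1 : ℝ)), one_sub_mul_xiTrig_zero hv.ne' hD.ne',
    div_pos_iff_of_pos_right hD]

theorem continuous_xiDen : Continuous (xiDen ξ α a c) := by
  unfold xiDen
  fun_prop

theorem isOpen_xiDom : IsOpen (xiDom ξ α a c) :=
  isOpen_Ioo.inter (isOpen_lt continuous_const continuous_xiDen)

theorem strictConvexOn_xiTrig (hv : 0 < v) (hξ : 0 < ξ) (ha : 0 < a) (hα : α ∈ Ioo 0 π)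
    (hc : 0 ≤ c) : StrictConvexOn ℝ (xiDom ξ α a c) (xiTrig v ξ α a c) := by
  rw [xiDom_eq_sep hv hξ ha]
  refine ((strictConvexOn_xiTrig_zero hv hξ ha hα).div_one_sub_mul
    (div_nonneg hc hv.le)).congr fun u hu => ?_
  exact (xiTrig_eq_div_one_sub hv.ne' (xiDen_zero_pos hξ ha hu.1).ne').symm

theorem continuous_xiSlopeNum : Continuous (xiSlopeNum ξ α a) := by
  unfold xiSlopeNum
  fun_prop

theorem mul_xiSlopeNum_pos (hξ : 0 < ξ) (ha : 0 < a) (hα : α ∈ Ioo 0 π)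
    (hu : α - a * u ∈ Icc 0 π) (hu0 : u ≠ 0) : 0 < u * xiSlopeNum ξ α a u := by
  have h₁ := mul_sin_mul_nonneg ha (mul_mem_Icc_neg_pi_pi hα hu)
  have h₂ := sin_nonneg_of_nonneg_of_le_pi hu.1 hu.2
  have h₃ := sin_pos_of_pos_of_lt_pi hα.1 hα.2
  have h : u * xiSlopeNum ξ α a u
      = ξ * (u * sin (a * u) * sin (α - a * u) + a * u ^ 2 * sin α) := by
    rw [xiSlopeNum]; ring
  rw [h]
  exact mul_pos hξ (add_pos_of_nonneg_of_pos (mul_nonneg h₁ h₂) (by positivity))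

theorem xiDen_eq_zero_of_mem_frontier (ha : 0 < a) (hα : α ∈ Ioo 0 π) (hc : 0 ≤ c) {x : ℝ}
    (hx : x ∈ frontier (xiDom ξ α a c)) : α - a * x ∈ Icc 0 π ∧ xiDen ξ α a c x = 0 := by
  rw [isOpen_xiDom.frontier_eq] at hx
  obtain ⟨hcl, hx_not⟩ := hx
  have hclosed : IsClosed {u ∈ Icc ((α - π) / a) (α / a) | 0 ≤ xiDen ξ α a c u} :=
    isClosed_Icc.inter (isClosed_le continuous_const continuous_xiDen)
  have hsub : xiDom ξ α a c ⊆ {u ∈ Icc ((α - π) / a) (α / a) | 0 ≤ xiDen ξ α a c u} :=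
    fun u hu => ⟨Ioo_subset_Icc_self hu.1, hu.2.le⟩
  obtain ⟨hIcc, hD⟩ := closure_minimal hsub hclosed hcl
  rw [mem_Icc_div_iff ha] at hIcc
  refine ⟨hIcc, le_antisymm ?_ hD⟩
  by_cases hIoo : α - a * x ∈ Ioo 0 π
  · exact not_lt.1 fun h => hx_not ⟨(mem_Ioo_div_iff ha).2 hIoo, h⟩
  · have hsin : sin (α - a * x) = 0 := by
      have hends : α - a * x ∈ ({0, π} : Set ℝ) := by
        rw [← Icc_sdiff_Ioo_same pi_pos.le]
        exact ⟨hIcc, hIoo⟩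
      rcases hends with h | h <;> rw [h] <;> simp
    rw [xiDen, hsin, mul_zero, zero_sub, neg_nonpos]
    exact mul_nonneg hc (mul_sin_mul_nonneg ha (mul_mem_Icc_neg_pi_pi hα hIcc))

theorem tendsto_abs_deriv_xiTrig_atTop (hv : 0 < v) (hξ : 0 < ξ) (ha : 0 < a)
    (hα : α ∈ Ioo 0 π) (hc : 0 ≤ c) {x : ℝ} (hx : x ∈ frontier (xiDom ξ α a c))
    {un : ℕ → ℝ} (hun : ∀ n, un n ∈ xiDom ξ α a c) (hlim : Tendsto un atTop (𝓝 x)) :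
    Tendsto (fun n => |deriv (xiTrig v ξ α a c) (un n)|) atTop atTop := by
  obtain ⟨hIcc, hD⟩ := xiDen_eq_zero_of_mem_frontier ha hα hc hx
  have hx0 : x ≠ 0 := by
    rintro rfl
    simp only [xiDen, mul_zero, sub_zero, zero_mul] at hD
    exact (mul_pos hξ (sin_pos_of_pos_of_lt_pi hα.1 hα.2)).ne' hD
  have hW : v * xiSlopeNum ξ α a x ≠ 0 :=
    mul_ne_zero hv.ne' (right_ne_zero_of_mul (mul_xiSlopeNum_pos hξ ha hα hIcc hx0).ne')
  have hlim_D : Tendsto (fun n => xiDen ξ α a c (un n)) atTop (𝓝 0) :=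
    hD ▸ (continuous_xiDen.tendsto x).comp hlim
  refine (tendsto_abs_div_sq_atTop
    (((continuous_const.mul continuous_xiSlopeNum).tendsto x).comp hlim) hW hlim_D
    (Eventually.of_forall fun n => (hun n).2.ne')).congr fun n => ?_
  rw [(hasDerivAt_xiTrig v (hun n).2.ne').deriv]
  rfl

end TrigForm

section Heston

variable {v ξ ρ t τ u : ℝ}

theorem arctan_sqrt_one_sub_sq_div_of_neg (h : ρ < 0) :
    arctan (√(1 - ρ ^ 2) / ρ) = arccos ρ - π := by
  have := arccos_eq_arctan (neg_pos.2 h)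
  rw [arccos_neg, neg_sq, div_neg, arctan_neg] at this
  linarith

theorem sqrt_one_sub_sq_pos (hρ : ρ ∈ Ioo (-1) 1) : 0 < √(1 - ρ ^ 2) :=
  sqrt_pos.2 (by nlinarith [hρ.1, hρ.2])

theorem uMinusK_eq (hρ : ρ ∈ Ioo (-1) 1) :
    uMinusK ξ ρ τ = (arccos ρ - π) / (ξ * √(1 - ρ ^ 2) * τ / 2) := by
  have hb := (sqrt_one_sub_sq_pos hρ).ne'
  rcases lt_trichotomy ρ 0 with h | rfl | h
  · rw [uMinusK, if_pos h, arctan_sqrt_one_sub_sq_div_of_neg h]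
    field_simp
  · simp only [uMinusK, lt_irrefl, if_false, if_true, arccos_zero]
    norm_num
    field_simp
    ring
  · rw [uMinusK, if_neg h.not_gt, if_neg h.ne', ← arccos_eq_arctan h]
    field_simp

theorem uPlusK_eq (hρ : ρ ∈ Ioo (-1) 1) :
    uPlusK ξ ρ τ = arccos ρ / (ξ * √(1 - ρ ^ 2) * τ / 2) := by
  have hb := (sqrt_one_sub_sq_pos hρ).ne'
  rcases lt_trichotomy ρ 0 with h | rfl | h
  · rw [uPlusK, if_pos h, arctan_sqrt_one_sub_sq_div_of_neg h]
    field_simp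
    ring
  · simp only [uPlusK, lt_irrefl, if_false, if_true, arccos_zero]
    norm_num
    field_simp
  · rw [uPlusK, if_neg h.not_gt, if_neg h.ne', ← arccos_eq_arctan h]
    field_simp

theorem arccos_mem_Ioo (hρ : ρ ∈ Ioo (-1) 1) : arccos ρ ∈ Ioo 0 π :=
  ⟨arccos_pos.2 hρ.2, arccos_lt_pi.2 hρ.1⟩

theorem Xi_eq_xiTrig (hρ : ρ ∈ Ioo (-1) 1) (ha : 0 < ξ * √(1 - ρ ^ 2) * τ / 2)
    (hu : u ∈ Ioo ((arccos ρ - π) / (ξ * √(1 - ρ ^ 2) * τ / 2))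
      (arccos ρ / (ξ * √(1 - ρ ^ 2) * τ / 2))) :
    Xi v ξ ρ u t τ = xiTrig v ξ (arccos ρ) (ξ * √(1 - ρ ^ 2) * τ / 2) (ξ ^ 2 * t / 2) u := by
  set a := ξ * √(1 - ρ ^ 2) * τ / 2
  rcases eq_or_ne u 0 with rfl | hu0
  · simp [Xi, xiTrig]
  have hα := arccos_mem_Ioo hρ
  have hs := (mem_Ioo_div_iff ha).1 hu
  have hsin : sin (a * u) ≠ 0 := by
    rw [Ne, sin_eq_zero_iff_of_lt_of_lt (by linarith [hs.2, hα.1]) (by linarith [hs.1, hα.2])]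
    exact mul_ne_zero ha.ne' hu0
  rw [Xi, if_neg hu0, xiTrig, xiDen, show ξ * √(1 - ρ ^ 2) * τ * u / 2 = a * u by ring,
    cot_eq_cos_div_sin, sin_sub, sin_arccos, cos_arccos hρ.1.le hρ.2.le]
  generalize sin (a * u) = s at hsin ⊢
  field_simp

theorem Kdom_eq_xiDom (hv : 0 < v) (hξ : 0 < ξ) (hτ : 0 < τ) (hρ : ρ ∈ Ioo (-1) 1) :
    Kdom v ξ ρ t τ = xiDom ξ (arccos ρ) (ξ * √(1 - ρ ^ 2) * τ / 2) (ξ ^ 2 * t / 2) := by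
  have ha : 0 < ξ * √(1 - ρ ^ 2) * τ / 2 := by
    have := sqrt_one_sub_sq_pos hρ
    positivity
  rw [Kdom, uMinusK_eq hρ, uPlusK_eq hρ, xiDom_eq_sep hv hξ ha]
  refine Set.ext fun u => and_congr_right fun hu => ?_
  rw [Xi_eq_xiTrig hρ ha hu, mul_zero, zero_div, div_mul_eq_mul_div, div_lt_one hv]
  constructor <;> intro h <;> linarith

end Heston

theorem statement12_general (v ξ ρ : ℝ) (hv : 0 < v) (hξ : 0 < ξ)
    (hρ : ρ ∈ Set.Ioo (-1 : ℝ) 1) (t τ : ℝ) (ht : 0 ≤ t) (hτ : 0 < τ) :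
    IsOpen (Kdom v ξ ρ t τ) ∧
      StrictConvexOn ℝ (Kdom v ξ ρ t τ) (fun u => Xi v ξ ρ u t τ) ∧
      ∀ x ∈ frontier (Kdom v ξ ρ t τ), ∀ un : ℕ → ℝ, (∀ n, un n ∈ Kdom v ξ ρ t τ) →
        Tendsto un atTop (𝓝 x) →
        Tendsto (fun n => |deriv (fun u => Xi v ξ ρ u t τ) (un n)|) atTop atTop := by
  set a := ξ * √(1 - ρ ^ 2) * τ / 2
  have ha : 0 < a := by
    have := sqrt_one_sub_sq_pos hρ
    positivity
  have hα := arccos_mem_Ioo hρ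
  have hc : 0 ≤ ξ ^ 2 * t / 2 := by positivity
  rw [Kdom_eq_xiDom hv hξ hτ hρ]
  have hXi : EqOn (fun u => Xi v ξ ρ u t τ) (xiTrig v ξ (arccos ρ) a (ξ ^ 2 * t / 2))
      (xiDom ξ (arccos ρ) a (ξ ^ 2 * t / 2)) := fun u hu => Xi_eq_xiTrig hρ ha hu.1
  refine ⟨isOpen_xiDom, (strictConvexOn_xiTrig hv hξ ha hα hc).congr hXi.symm,
    fun x hx un hun hlim => ?_⟩
  have hderiv : ∀ n, deriv (fun u => Xi v ξ ρ u t τ) (un n)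
      = deriv (xiTrig v ξ (arccos ρ) a (ξ ^ 2 * t / 2)) (un n) := fun n =>
    (hXi.eventuallyEq_of_mem (isOpen_xiDom.mem_nhds (hun n))).deriv_eq
  simpa only [hderiv] using tendsto_abs_deriv_xiTrig_atTop hv hξ ha hα hc hx hun hlim

/-- Lemma 5.7 of the paper: for Heston-type parameters, for every `t ≥ 0`
and `τ > 0` the function `u ↦ Ξ(u,t,τ)` is strictly convex on the open set `K_{t,τ}` and is
essentially smooth there: `|∂_u Ξ(u_n,t,τ)| → ∞` along any sequence in `K_{t,τ}` converging
to a boundary point of `K_{t,τ}`. -/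
theorem statement12 (v κ θ ξ ρ : ℝ) (hv : 0 < v) (hκ : 0 < κ) (hθ : 0 < θ) (hξ : 0 < ξ)
    (hρ : ρ ∈ Set.Ioo (-1 : ℝ) 1) (t τ : ℝ) (ht : 0 ≤ t) (hτ : 0 < τ) :
    IsOpen (Kdom v ξ ρ t τ) ∧
      StrictConvexOn ℝ (Kdom v ξ ρ t τ) (fun u => Xi v ξ ρ u t τ) ∧
      ∀ x ∈ frontier (Kdom v ξ ρ t τ), ∀ un : ℕ → ℝ, (∀ n, un n ∈ Kdom v ξ ρ t τ) →
        Tendsto un atTop (𝓝 x) →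
        Tendsto (fun n => |deriv (fun u => Xi v ξ ρ u t τ) (un n)|) atTop atTop :=
  statement12_general v ξ ρ hv hξ hρ t τ ht hτ
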